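/- A graph G is a cograph (i.e., constructible from single-vertex graphs by series and parallel compositions) if and only if G contains no induced path on four vertices. -/

import Mathlib

/-- `{a,b,c,d}` induces a path `a - b - c - d` on four vertices in `G`. -/
def IsInducedP4 {V : Type*} (G : SimpleGraph V) (a b c d : V) : Prop :=
  a ≠ b ∧ a ≠ c ∧ a ≠ d ∧ b ≠ c ∧ b ≠ d ∧ c ≠ d ∧
  G.Adj a b ∧ G.Adj b c ∧ G.Adj c d ∧ ¬ G.Adj a c ∧ ¬ G.Adj a d ∧ ¬ G.Adj b d

/-- `G` has no induced path on four vertices. -/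
def P4Free {V : Type*} (G : SimpleGraph V) : Prop := ∀ a b c d : V, ¬ IsInducedP4 G a b c d

open SimpleGraph in
/-- Graphs constructible from single-vertex graphs by parallel composition (disjoint
union `⊕g`) and series composition (disjoint union plus all cross edges, obtained here
as the complement of the disjoint union of the complements). -/
inductive IsCographAux : ∀ {W : Type}, SimpleGraph W → Prop
  | single : IsCographAux (⊥ : SimpleGraph PUnit)
  | parallel {W₁ W₂ : Type} {G₁ : SimpleGraph W₁} {G₂ : SimpleGraph W₂} :
      IsCographAux G₁ → IsCographAux G₂ → IsCographAux (G₁ ⊕g G₂)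
  | series {W₁ W₂ : Type} {G₁ : SimpleGraph W₁} {G₂ : SimpleGraph W₂} :
      IsCographAux G₁ → IsCographAux G₂ → IsCographAux ((G₁ᶜ ⊕g G₂ᶜ)ᶜ)

/-- `G` is a cograph: it is isomorphic to a graph constructible from single-vertex
graphs by series and parallel compositions. -/
def IsCograph {V : Type} (G : SimpleGraph V) : Prop :=
  ∃ (W : Type) (H : SimpleGraph W), IsCographAux H ∧ Nonempty (G ≃g H)

/-!
Cographs are `P4`-free: being `P4`-free is inherited by induced subgraphs, complements (the
complement of the path `a - b - c - d` is the path `b - d - a - c`) and disjoint unions (a `P4`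
is connected), and a series composition is the complement of a disjoint union of complements.

Conversely, a `P4`-free graph `G` on at least two vertices is disconnected or has a disconnected
complement (Seinsche). Otherwise remove a vertex `v`: by induction `G - v` or its complement is
disconnected, say `G - v` (the other case is the same argument in `Gᶜ`). If `v` had a non-neighbour
`u`, then walking in the component of `u` from a neighbour of `v` to `u` gives an edge `pq` with
`p ~ v ≁ q`, and with a neighbour `w` of `v` in another component, `q - p - v - w` is an induced
`P4`. So `v` is universal, i.e. isolated in the connected graph `Gᶜ`, which is absurd. Splitting
off a component of `G` or of `Gᶜ` then builds `G` by induction.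
-/

section
open SimpleGraph

variable {V W : Type*} {G : SimpleGraph V} {a b c d : V}

theorem isInducedP4_iff : IsInducedP4 G a b c d ↔
    G.Adj a b ∧ G.Adj b c ∧ G.Adj c d ∧ ¬G.Adj a c ∧ ¬G.Adj a d ∧ ¬G.Adj b d := by
  refine ⟨fun h ↦ h.2.2.2.2.2.2, fun ⟨hab, hbc, hcd, hac, had, hbd⟩ ↦ ?_⟩
  -- the distinctness conditions follow from the (non-)adjacencies
  refine ⟨hab.ne, ?_, ?_, hbc.ne, ?_, hcd.ne, hab, hbc, hcd, hac, had, hbd⟩ <;> rintro rfl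
  exacts [had hcd, hac hcd.symm, had hab]

theorem SimpleGraph.Embedding.isInducedP4_iff {H : SimpleGraph W} (f : G ↪g H) :
    IsInducedP4 H (f a) (f b) (f c) (f d) ↔ IsInducedP4 G a b c d := by
  simp only [_root_.isInducedP4_iff, f.map_adj_iff]

theorem IsInducedP4.of_compl (h : IsInducedP4 Gᶜ a b c d) : IsInducedP4 G b d a c := by
  obtain ⟨hab, hac, had, -, hbd, -, ⟨-, hab'⟩, ⟨-, hbc'⟩, ⟨-, hcd'⟩, hac', had', hbd'⟩ := h
  simp only [compl_adj, not_and, not_not] at hac' had' hbd'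
  exact isInducedP4_iff.mpr
    ⟨hbd' hbd, (had' had).symm, hac' hac, (hab' ·.symm), hbc', (hcd' ·.symm)⟩

theorem P4Free.comap {H : SimpleGraph W} (f : G ↪g H) (hH : P4Free H) : P4Free G :=
  fun _ _ _ _ h ↦ hH _ _ _ _ ((f.isInducedP4_iff).mpr h)

theorem P4Free.compl (hG : P4Free G) : P4Free Gᶜ :=
  fun _ _ _ _ h ↦ hG _ _ _ _ h.of_compl

theorem P4Free.sum {H : SimpleGraph W} (hG : P4Free G) (hH : P4Free H) : P4Free (G ⊕g H) := by
  rintro (a | a) (b | b) (c | c) (d | d) h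
  all_goals first
    | exact hG a b c d (Embedding.sumInl.isInducedP4_iff.mp h)
    | exact hH a b c d (Embedding.sumInr.isInducedP4_iff.mp h)
    | simp [isInducedP4_iff] at h

namespace SimpleGraph

theorem compl_induce (s : Set V) : (G.induce s)ᶜ = Gᶜ.induce s := by
  ext u w
  simp [Subtype.ext_iff]

theorem Reachable.exists_adj_mem_notMem {S : Set V} {x y : V} (h : G.Reachable x y) (hx : x ∈ S)
    (hy : y ∉ S) : ∃ p q, G.Reachable x p ∧ G.Adj p q ∧ p ∈ S ∧ q ∉ S := by
  classical
  obtain ⟨w⟩ := h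
  obtain ⟨d, hd, hdS, hdS'⟩ := w.exists_boundary_dart S hx hy
  exact ⟨d.fst, d.snd, ⟨w.takeUntil _ (w.dart_fst_mem_support_of_mem_darts hd)⟩, d.adj, hdS, hdS'⟩

theorem Walk.exists_reachable_induce_compl_singleton_adj {u v : V} (p : G.Walk u v) (hu : u ≠ v) :
    ∃ w, ∃ hw : w ≠ v, (G.induce {v}ᶜ).Reachable ⟨u, hu⟩ ⟨w, hw⟩ ∧ G.Adj w v := by
  induction p with
  | nil => exact absurd rfl hu
  | @cons u y v huy _ ih =>
    by_cases hy : y = v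
    · subst hy
      exact ⟨u, hu, .rfl, huy⟩
    · obtain ⟨w, hw, hyw, hwv⟩ := ih hy
      exact ⟨w, hw, (show (G.induce {v}ᶜ).Adj ⟨u, hu⟩ ⟨y, hy⟩ from huy).reachable.trans hyw, hwv⟩

theorem Preconnected.exists_reachable_induce_compl_singleton_adj (hG : G.Preconnected) {v : V}
    (u : ({v}ᶜ : Set V)) : ∃ w, (G.induce {v}ᶜ).Reachable u w ∧ G.Adj w v := by
  obtain ⟨p⟩ := hG u v
  obtain ⟨w, hw, huw, hwv⟩ := p.exists_reachable_induce_compl_singleton_adj u.2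
  exact ⟨⟨w, hw⟩, huw, hwv⟩

end SimpleGraph

theorem P4Free.isUniversal_of_not_preconnected_induce (hP : P4Free G) (hG : G.Preconnected)
    {v : V} (hH : ¬(G.induce {v}ᶜ).Preconnected) : G.IsUniversal v := by
  set H := G.induce ({v}ᶜ : Set V)
  intro u hvu
  by_contra huv
  let u' : ({v}ᶜ : Set V) := ⟨u, hvu.symm⟩
  obtain ⟨c, hc⟩ : ∃ c, ¬H.Reachable u' c := by
    contrapose! hH
    exact fun a b ↦ (hH a).symm.trans (hH b)
  obtain ⟨w, hcw, hwv⟩ := hG.exists_reachable_induce_compl_singleton_adj c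
  obtain ⟨x, hux, hxv⟩ := hG.exists_reachable_induce_compl_singleton_adj u'
  obtain ⟨p, q, hxp, hpq, hpv, hqv⟩ :=
    hux.symm.exists_adj_mem_notMem (S := {s : ({v}ᶜ : Set V) | G.Adj s v}) hxv (huv ·.symm)
  have hup : H.Reachable u' p := hux.trans hxp
  -- `p` and `q` lie in the component of `u` in `G - v`, and `w` in another one
  have hpw : ¬G.Adj p w := fun h ↦
    hc ((hup.trans (show H.Adj p w from h).reachable).trans hcw.symm)
  have hqw : ¬G.Adj q w := fun h ↦
    hc (((hup.trans hpq.reachable).trans (show H.Adj q w from h).reachable).trans hcw.symm)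
  exact hP q p v w (isInducedP4_iff.mpr ⟨hpq.symm, hpv, hwv.symm, hqv, hqw, hpw⟩)

theorem SimpleGraph.isUniversal_or_isUniversal_compl_of_subsingleton {v : V}
    (h : ({v}ᶜ : Set V).Subsingleton) : G.IsUniversal v ∨ Gᶜ.IsUniversal v := by
  by_contra! ⟨hG, hGc⟩
  obtain ⟨w, hvw, hw⟩ : ∃ w, v ≠ w ∧ ¬G.Adj v w := by simpa [IsUniversal] using hG
  obtain ⟨w', hvw', hw'⟩ : ∃ w, v ≠ w ∧ ¬Gᶜ.Adj v w := by simpa [IsUniversal] using hGc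
  exact hw' ⟨hvw', h hvw.symm hvw'.symm ▸ hw⟩

theorem P4Free.not_preconnected_compl [Finite V] [Nontrivial V] (hP : P4Free G)
    (hG : G.Preconnected) : ¬Gᶜ.Preconnected := by
  induction hn : Nat.card V using Nat.strong_induction_on generalizing V with
  | _ n ih =>
  intro hGc
  obtain ⟨v⟩ := ‹Nontrivial V›.to_nonempty
  suffices G.IsUniversal v ∨ Gᶜ.IsUniversal v by
    rcases this with hv | hv
    · exact hGc.not_isIsolated v (isIsolated_compl_iff_isUniversal.mpr hv)
    · exact hG.not_isIsolated v (isUniversal_compl_iff_isIsolated.mp hv)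
  by_cases hH : (G.induce {v}ᶜ).Preconnected
  · by_cases hHc : (Gᶜ.induce {v}ᶜ).Preconnected
    · rcases ({v}ᶜ : Set V).subsingleton_or_nontrivial with hs | hs
      · exact isUniversal_or_isUniversal_compl_of_subsingleton hs
      · have := hs.coe_sort
        have hcard : Nat.card ({v}ᶜ : Set V) < n := hn ▸ Finite.card_subtype_lt (x := v) (by simp)
        exact absurd (by rwa [compl_induce]) (ih _ hcard (hP.comap (Embedding.induce _)) hH rfl)
    · exact .inr (hP.compl.isUniversal_of_not_preconnected_induce hGc hHc)
  · exact .inl (hP.isUniversal_of_not_preconnected_induce hG hH)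

namespace SimpleGraph

variable {H : SimpleGraph W}

def Iso.compl (e : G ≃g H) : Gᶜ ≃g Hᶜ where
  toEquiv := e.toEquiv
  map_rel_iff' := by simp [e.map_adj_iff]

open scoped Classical in
noncomputable def Iso.sumInduceCompl {S : Set V} (hS : ∀ x y, x ∈ S → y ∉ S → ¬G.Adj x y) :
    G.induce S ⊕g G.induce Sᶜ ≃g G where
  toEquiv := Equiv.Set.sumCompl S
  map_rel_iff' := by
    rintro (⟨x, hx⟩ | ⟨x, hx⟩) (⟨y, hy⟩ | ⟨y, hy⟩)
    all_goals simp only [Equiv.Set.sumCompl_apply_inl, Equiv.Set.sumCompl_apply_inr, sum_adj,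
      comap_adj, Function.Embedding.subtype_apply, iff_false, iff_self]
    exacts [hS x y hx hy, fun h ↦ hS y x hy hx h.symm]

end SimpleGraph

end

section

open SimpleGraph

variable {V W : Type} {G : SimpleGraph V} {H : SimpleGraph W}

theorem IsCographAux.p4Free (h : IsCographAux H) : P4Free H := by
  induction h with
  | single => exact fun a b _ _ h ↦ h.1 (Subsingleton.elim a b)
  | parallel _ _ ih₁ ih₂ => exact ih₁.sum ih₂
  | series _ _ ih₁ ih₂ => exact (ih₁.compl.sum ih₂.compl).compl

theorem IsCograph.p4Free : IsCograph G → P4Free G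
  | ⟨_, _, hH, ⟨e⟩⟩ => hH.p4Free.comap e.toEmbedding

theorem IsCograph.of_iso (e : G ≃g H) : IsCograph H → IsCograph G
  | ⟨_, _, hH', ⟨e'⟩⟩ => ⟨_, _, hH', ⟨e.trans e'⟩⟩

theorem isCograph_of_subsingleton [Nonempty V] [Subsingleton V] (G : SimpleGraph V) :
    IsCograph G := by
  have : Unique V := uniqueOfSubsingleton (Classical.arbitrary V)
  refine ⟨PUnit, ⊥, .single, ⟨{ toEquiv := Equiv.equivPUnit V, map_rel_iff' := ?_ }⟩⟩
  simp

theorem IsCograph.sum : IsCograph G → IsCograph H → IsCograph (G ⊕g H)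
  | ⟨_, _, hG', ⟨e⟩⟩, ⟨_, _, hH', ⟨f⟩⟩ => ⟨_, _, hG'.parallel hH', ⟨e.sumCongr f⟩⟩

theorem IsCograph.series : IsCograph G → IsCograph H → IsCograph (Gᶜ ⊕g Hᶜ)ᶜ
  | ⟨_, _, hG', ⟨e⟩⟩, ⟨_, _, hH', ⟨f⟩⟩ =>
    ⟨_, _, hG'.series hH', ⟨(e.compl.sumCongr f.compl).compl⟩⟩

theorem IsCographAux.isCograph_compl (h : IsCographAux H) : IsCograph Hᶜ := by
  induction h with
  | single => exact isCograph_of_subsingleton _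
  | parallel _ _ ih₁ ih₂ => simpa using ih₁.series ih₂
  | series _ _ ih₁ ih₂ => simpa using ih₁.sum ih₂

theorem IsCograph.compl : IsCograph G → IsCograph Gᶜ
  | ⟨_, _, hH, ⟨e⟩⟩ => hH.isCograph_compl.of_iso e.compl

theorem isCograph_of_not_preconnected
    (ih : ∀ S : Set V, S.Nonempty → Sᶜ.Nonempty → IsCograph (G.induce S))
    (hG : ¬G.Preconnected) : IsCograph G := by
  obtain ⟨a, b, hab⟩ : ∃ a b, ¬G.Reachable a b := by simpa [Preconnected] using hG
  let S := {w | G.Reachable a w}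
  have hS : ∀ x y, x ∈ S → y ∉ S → ¬G.Adj x y := fun x y hx hy hxy ↦ hy (hx.trans hxy.reachable)
  have hSc : Sᶜ.Nonempty := ⟨b, hab⟩
  exact ((ih S ⟨a, .rfl⟩ hSc).sum (ih Sᶜ hSc (by simpa using ⟨a, .rfl⟩))).of_iso
    (Iso.sumInduceCompl hS).symm

theorem P4Free.isCograph [Finite V] [Nonempty V] (hP : P4Free G) : IsCograph G := by
  induction hn : Nat.card V using Nat.strong_induction_on generalizing V with
  | _ n ih =>
  have ih_induce {G' : SimpleGraph V} (hP' : P4Free G') (S : Set V) (hS : S.Nonempty)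
      (hSc : Sᶜ.Nonempty) : IsCograph (G'.induce S) := by
    have := hS.to_subtype
    exact ih _ (hn ▸ Finite.card_subtype_lt hSc.some_mem) (hP'.comap (Embedding.induce S)) rfl
  rcases subsingleton_or_nontrivial V with _ | _
  · exact isCograph_of_subsingleton G
  by_cases hG : G.Preconnected
  · simpa using (isCograph_of_not_preconnected (ih_induce hP.compl)
      (hP.not_preconnected_compl hG)).compl
  · exact isCograph_of_not_preconnected (ih_induce hP) hG

end

theorem stmt6 {V : Type} [Finite V] [Nonempty V] (G : SimpleGraph V) :
    IsCograph G ↔ P4Free G :=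
  ⟨IsCograph.p4Free, P4Free.isCograph⟩
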